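/- arXiv:2411.19815 — 5 statements merged into one kernel-verified Lean document; each statement's English description precedes it below -/
import Mathlib

section
/- Let A be a commutative ℚ-algebra, D : A → A a derivation, and G, ℓ ∈ A elements with Dℓ = 0 and D²G = ℓ·G. Define recursively G₁ = G and G_{n+1} = (DG)·G_n + (1/n)·G·(DG_n) for n ≥ 1. Then for every n ≥ 1, D²G_n = n²·ℓ·G_n. -/
/-- If `D` is a derivation on a commutative `ℚ`-algebra `A`, `Dℓ = 0` and `D²G = ℓ·G`,
then the terms of the recursion `G₁ = G`, `G_{n+1} = (DG)·G_n + (1/n)·G·(DG_n)`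
satisfy `D²G_n = n²·ℓ·G_n` for all `n ≥ 1`. -/
theorem recursion_eigen {A : Type*} [CommRing A] [Algebra ℚ A]
    (D : Derivation ℚ A A) (G ℓ : A)
    (hℓ : D ℓ = 0) (hG : D (D G) = ℓ * G)
    (Gs : ℕ → A) (h1 : Gs 1 = G)
    (hrec : ∀ n : ℕ, 1 ≤ n →
      Gs (n + 1) = D G * Gs n + (n : ℚ)⁻¹ • (G * D (Gs n))) :
    ∀ n : ℕ, 1 ≤ n → D (D (Gs n)) = (n : A) ^ 2 * (ℓ * Gs n) := by
  intro n hn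
  induction n with
  | zero => omega
  | succ m ih =>
    rcases Nat.lt_or_ge m 1 with hm | hm
    · interval_cases m
      simp [h1, hG]
    · have ihm := ih hm
      have hm0 : (m : ℚ) ≠ 0 := by exact_mod_cast Nat.one_le_iff_ne_zero.mp hm
      have hc : (m : A) * algebraMap ℚ A ((m : ℚ)⁻¹) = 1 := by
        have h : ((m : ℕ) : A) = algebraMap ℚ A ((m : ℕ) : ℚ) := by simp
        rw [h, ← map_mul, mul_inv_cancel₀ hm0, map_one]
      have hDm : D (((m : A)) ^ 2) = 0 := by
        rw [← Nat.cast_pow]; exact D.map_natCast _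
      rw [hrec m hm, Algebra.smul_def]
      simp only [Derivation.leibniz, map_add, Derivation.map_algebraMap, hℓ, hG, ihm,
        zero_mul, mul_zero, add_zero, zero_add, Nat.cast_add, Nat.cast_one, smul_eq_mul,
        smul_zero, map_zero, Derivation.map_natCast, hDm]
      linear_combination (2 * (m : A) * ℓ * D G * Gs m - 2 * ℓ * G * D (Gs m)) * hc
end

section
/- Let A be a commutative ℚ-algebra, D : A → A a derivation, and G, ℓ ∈ A with Dℓ = 0 and D²G = ℓ·G. Define G₁ = G and G_{n+1} = (DG)·G_n + (1/n)·G·(DG_n). Then for every n ≥ 1, G_n = Σ_{j=0}^{⌊(n-1)/2⌋} binom(n, 2j+1) · G^{2j+1} · (DG)^{n-2j-1} · ℓ^j. -/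
open Finset

lemma choose_key (n k : ℕ) : n * (n+1).choose (k+1) = (n + k + 1) * n.choose (k+1) + k * n.choose k := by
  rcases le_or_gt k n with h | h
  · have h1 := Nat.choose_succ_right_eq n k
    have h2 : (n+1).choose (k+1) = n.choose k + n.choose (k+1) := Nat.choose_succ_succ n k
    obtain ⟨m, rfl⟩ := Nat.exists_eq_add_of_le h
    simp only [Nat.add_sub_cancel_left] at h1
    zify at h1 h2 ⊢
    linear_combination ((k:ℤ)+m) * h2 - h1
  · have e1 : n.choose (k+1) = 0 := Nat.choose_eq_zero_of_lt (by omega)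
    have e2 : n.choose k = 0 := Nat.choose_eq_zero_of_lt h
    have e3 : (n+1).choose (k+1) = 0 := Nat.choose_eq_zero_of_lt (by omega)
    simp [e1, e2, e3]

lemma Dmon {A : Type*} [CommRing A] [Algebra ℚ A] (D : Derivation ℚ A A) (G ℓ : A)
    (hℓ : D ℓ = 0) (hG : D (D G) = ℓ * G) (c : A) (hc : D c = 0) (a b j : ℕ) :
    D (c * G^a * (D G)^b * ℓ^j)
      = c * ((a:A) * G^(a-1) * (D G)^(b+1)
        + (b:A) * G^(a+1) * (D G)^(b-1) * ℓ) * ℓ^j := by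
  simp only [Derivation.leibniz, Derivation.leibniz_pow, hℓ, hG, hc,
    smul_eq_mul, nsmul_eq_mul, smul_zero, mul_zero, zero_mul, add_zero, zero_add, smul_smul,
    smul_add, mul_smul_comm, smul_mul_assoc]
  ring

lemma step_key {A : Type*} [CommRing A] [Algebra ℚ A]
    (D : Derivation ℚ A A) (G ℓ : A)
    (hℓ : D ℓ = 0) (hG : D (D G) = ℓ * G) (n : ℕ) :
    (n:A) * (D G * ∑ j ∈ range n,
        (n.choose (2*j+1) : A) * G^(2*j+1) * (D G)^(n-2*j-1) * ℓ^j)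
      + G * D (∑ j ∈ range n,
        (n.choose (2*j+1) : A) * G^(2*j+1) * (D G)^(n-2*j-1) * ℓ^j)
    = (n:A) * ∑ j ∈ range (n+1),
        ((n+1).choose (2*j+1) : A) * G^(2*j+1) * (D G)^(n+1-2*j-1) * ℓ^j := by
  have hcast : ∀ m : ℕ, D ((m:A)) = 0 := fun m => by
    rw [show ((m:A)) = algebraMap ℚ A (m:ℚ) by simp]; exact Derivation.map_algebraMap D _
  -- compute the derivative of the sum
  rw [map_sum]
  have hD : ∀ j ∈ range n,
      D ((n.choose (2*j+1) : A) * G^(2*j+1) * (D G)^(n-2*j-1) * ℓ^j)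
      = (n.choose (2*j+1) : A) * (((2*j+1 : ℕ):A) * G^(2*j) * (D G)^((n-2*j-1)+1)
        + ((n-2*j-1 : ℕ):A) * G^(2*j+2) * (D G)^((n-2*j-1)-1) * ℓ) * ℓ^j := by
    intro j _
    have := Dmon D G ℓ hℓ hG (n.choose (2*j+1) : A) (hcast _) (2*j+1) (n-2*j-1) j
    simpa using this
  rw [Finset.sum_congr rfl hD]
  -- split, distribute
  rw [Finset.mul_sum, Finset.mul_sum, Finset.mul_sum]
  have split : ∀ j ∈ range n,
      G * ((n.choose (2*j+1) : A) * (((2*j+1 : ℕ):A) * G^(2*j) * (D G)^((n-2*j-1)+1)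
        + ((n-2*j-1 : ℕ):A) * G^(2*j+2) * (D G)^((n-2*j-1)-1) * ℓ) * ℓ^j)
      = ((2*j+1 : ℕ):A) * (n.choose (2*j+1) : A) * G^(2*j+1) * (D G)^((n-2*j-1)+1) * ℓ^j
        + ((2*(j+1) : ℕ):A) * (n.choose (2*(j+1)) : A) * G^(2*(j+1)+1) * (D G)^(n-2*(j+1)) * ℓ^(j+1) := by
    intro j _
    have hc : ((n-2*j-1 : ℕ):A) * (n.choose (2*j+1) : A)
        = ((2*(j+1) : ℕ):A) * (n.choose (2*(j+1)) : A) := by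
      have h0 := Nat.choose_succ_right_eq n (2*j+1)
      have h2 : n.choose (2*j+2) * (2*j+2) = n.choose (2*j+1) * (n - 2*j - 1) := by
        rw [h0]; congr 1
      have h3 : (n - 2*j - 1) * n.choose (2*j+1) = (2*(j+1)) * n.choose (2*(j+1)) := by
        calc (n-2*j-1) * n.choose (2*j+1) = n.choose (2*j+1) * (n-2*j-1) := mul_comm _ _
        _ = n.choose (2*j+2) * (2*j+2) := h2.symm
        _ = (2*(j+1)) * n.choose (2*(j+1)) := by
            rw [show 2*(j+1) = 2*j+2 from by ring, mul_comm]
      rw [← Nat.cast_mul, ← Nat.cast_mul, h3]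
    have hexp : (n-2*j-1)-1 = n-2*(j+1) := by omega
    rw [hexp] at *
    calc G * ((n.choose (2*j+1) : A) * (((2*j+1 : ℕ):A) * G^(2*j) * (D G)^((n-2*j-1)+1)
        + ((n-2*j-1 : ℕ):A) * G^(2*j+2) * (D G)^(n-2*(j+1)) * ℓ) * ℓ^j)
        = ((2*j+1 : ℕ):A) * (n.choose (2*j+1) : A) * G^(2*j+1) * (D G)^((n-2*j-1)+1) * ℓ^j
        + (((n-2*j-1 : ℕ):A) * (n.choose (2*j+1) : A)) * G^(2*(j+1)+1) * (D G)^(n-2*(j+1)) * ℓ^(j+1) := by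
          push_cast
          ring
      _ = _ := by rw [hc]
  rw [Finset.sum_congr rfl split, Finset.sum_add_distrib]
  -- reindex the second sum
  have reidx : ∑ j ∈ range n,
      ((2*(j+1) : ℕ):A) * (n.choose (2*(j+1)) : A) * G^(2*(j+1)+1) * (D G)^(n-2*(j+1)) * ℓ^(j+1)
      = ∑ j ∈ range (n+1), ((2*j : ℕ):A) * (n.choose (2*j) : A) * G^(2*j+1) * (D G)^(n-2*j) * ℓ^j := by
    rw [Finset.sum_range_succ' (fun j => ((2*j : ℕ):A) * (n.choose (2*j) : A) * G^(2*j+1) * (D G)^(n-2*j) * ℓ^j) n]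
    simp
  rw [reidx]
  -- pad the first two sums to range (n+1)
  have pad : ∀ g : ℕ → ℕ → A, ∑ j ∈ range n, (n.choose (2*j+1) : A) * g n j
      = ∑ j ∈ range (n+1), (n.choose (2*j+1) : A) * g n j := by
    intro g
    rw [Finset.sum_range_succ]
    have : n.choose (2*n+1) = 0 := Nat.choose_eq_zero_of_lt (by omega)
    simp [this]
  have pad1 : ∑ j ∈ range n, (n:A) * (D G * ((n.choose (2*j+1) : A) * G^(2*j+1) * (D G)^(n-2*j-1) * ℓ^j))
      = ∑ j ∈ range (n+1), (n:A) * (D G * ((n.choose (2*j+1) : A) * G^(2*j+1) * (D G)^(n-2*j-1) * ℓ^j)) := by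
    rw [Finset.sum_range_succ]
    have : n.choose (2*n+1) = 0 := Nat.choose_eq_zero_of_lt (by omega)
    simp [this]
  have pad2 : ∑ j ∈ range n, ((2*j+1 : ℕ):A) * (n.choose (2*j+1) : A) * G^(2*j+1) * (D G)^((n-2*j-1)+1) * ℓ^j
      = ∑ j ∈ range (n+1), ((2*j+1 : ℕ):A) * (n.choose (2*j+1) : A) * G^(2*j+1) * (D G)^((n-2*j-1)+1) * ℓ^j := by
    rw [Finset.sum_range_succ]
    have : n.choose (2*n+1) = 0 := Nat.choose_eq_zero_of_lt (by omega)
    simp [this]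
  rw [pad1, pad2, Finset.mul_sum, ← Finset.sum_add_distrib, ← Finset.sum_add_distrib]
  refine Finset.sum_congr rfl fun j _ => ?_
  have hk := choose_key n (2*j)
  have hkA : ((n : ℕ):A) * ((n+1).choose (2*j+1) : A)
      = ((n + 2*j + 1 : ℕ):A) * (n.choose (2*j+1) : A) + ((2*j : ℕ):A) * (n.choose (2*j) : A) := by
    rw [← Nat.cast_mul, ← Nat.cast_mul, ← Nat.cast_mul, ← Nat.cast_add]
    exact congrArg (Nat.cast) hk
  have e1 : n+1-2*j-1 = n-2*j := by omega
  rw [e1]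
  rcases le_or_gt (2*j+1) n with hle | hlt
  · set m := n - 2*j - 1 with hmdef
    have hm : n - 2*j = m + 1 := by omega
    rw [hm]
    push_cast at hkA ⊢
    linear_combination (-(G^(2*j+1) * (D G)^(m+1) * ℓ^j)) * hkA
  · have hC1 : n.choose (2*j+1) = 0 := Nat.choose_eq_zero_of_lt hlt
    rw [hC1] at hkA ⊢
    push_cast at hkA ⊢
    linear_combination (-(G^(2*j+1) * (D G)^(n-2*j) * ℓ^j)) * hkA

/-- Closed form of the recursion `G₁ = G`, `G_{n+1} = (DG)·G_n + (1/n)·G·(DG_n)`: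
`G_n = Σ_{j=0}^{⌊(n-1)/2⌋} C(n,2j+1) G^{2j+1} (DG)^{n-2j-1} ℓ^j`. -/
theorem recursion_closed_form {A : Type*} [CommRing A] [Algebra ℚ A]
    (D : Derivation ℚ A A) (G ℓ : A)
    (hℓ : D ℓ = 0) (hG : D (D G) = ℓ * G)
    (Gs : ℕ → A) (h1 : Gs 1 = G)
    (hrec : ∀ n : ℕ, 1 ≤ n →
      Gs (n + 1) = D G * Gs n + (n : ℚ)⁻¹ • (G * D (Gs n))) :
    ∀ n : ℕ, 1 ≤ n →
      Gs n = ∑ j ∈ Finset.range ((n - 1) / 2 + 1),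
        (n.choose (2 * j + 1) : A) * G ^ (2 * j + 1) * (D G) ^ (n - 2 * j - 1) * ℓ ^ j := by

  have pad : ∀ m : ℕ, 1 ≤ m →
      (∑ j ∈ Finset.range ((m - 1) / 2 + 1),
        (m.choose (2 * j + 1) : A) * G ^ (2 * j + 1) * (D G) ^ (m - 2 * j - 1) * ℓ ^ j)
      = ∑ j ∈ Finset.range m,
        (m.choose (2 * j + 1) : A) * G ^ (2 * j + 1) * (D G) ^ (m - 2 * j - 1) * ℓ ^ j := by
    intro m hm
    refine Finset.sum_subset (Finset.range_subset_range.2 (by omega)) ?_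
    intro j hj hj2
    simp only [Finset.mem_range] at hj hj2
    have : m < 2 * j + 1 := by omega
    simp [Nat.choose_eq_zero_of_lt this]
  intro n hn
  induction n, hn using Nat.le_induction with
  | base => simp [h1]
  | succ n hn IH =>
    rw [pad (n+1) (by omega), hrec n hn, IH, pad n hn]
    have hn0 : ((n:ℚ)) ≠ 0 := by positivity
    have key := step_key D G ℓ hℓ hG n
    have hsm : ∀ x : A, (n:A) * x = (n:ℚ) • x := fun x => by
      rw [Nat.cast_smul_eq_nsmul, nsmul_eq_mul]
    rw [hsm, hsm] at key
    have : G * D (∑ j ∈ Finset.range n,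
        (n.choose (2*j+1) : A) * G^(2*j+1) * (D G)^(n-2*j-1) * ℓ^j)
        = (n:ℚ) • ((∑ j ∈ Finset.range (n+1),
          ((n+1).choose (2*j+1) : A) * G^(2*j+1) * (D G)^(n+1-2*j-1) * ℓ^j)
          - D G * ∑ j ∈ Finset.range n,
            (n.choose (2*j+1) : A) * G^(2*j+1) * (D G)^(n-2*j-1) * ℓ^j) := by
      rw [smul_sub]
      rw [← key]
      ring
    rw [this, inv_smul_smul₀ hn0]
    ring
end

section
/- Let A be a commutative ℚ-algebra, D : A → A a derivation, and let p, a, ℓ, g ∈ A satisfy Dp = Da = Dℓ = 0 and D²g = n²·ℓ·g for a positive integer n. Then for every r ≥ 1, the operator (multiplication by p plus a·D) satisfies (p + aD)^r(g) = P·g + Q·(Dg), where P = Σ_{j=0}^{⌊r/2⌋} binom(r,2j) · a^{2j} · n^{2j} · p^{r-2j} · ℓ^j and Q = Σ_{j=0}^{⌊(r-1)/2⌋} binom(r,2j+1) · a^{2j+1} · n^{2j} · p^{r-2j-1} · ℓ^j. -/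
open Finset

section auxop
variable {A : Type*} [CommRing A] [Algebra ℚ A]

def opexpP (p a ℓ : A) (n r : ℕ) : A :=
  ∑ j ∈ Finset.range (r + 1),
    (r.choose (2 * j) : A) * a ^ (2 * j) * (n : A) ^ (2 * j) * p ^ (r - 2 * j) * ℓ ^ j

def opexpQ (p a ℓ : A) (n r : ℕ) : A :=
  ∑ j ∈ Finset.range (r + 1),
    (r.choose (2 * j + 1) : A) * a ^ (2 * j + 1) * (n : A) ^ (2 * j) * p ^ (r - 2 * j - 1) * ℓ ^ j

variable (D : Derivation ℚ A A)

lemma opexp_Dnat (m : ℕ) : D ((m : A)) = 0 := by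
  have : ((m : A)) = algebraMap ℚ A (m : ℚ) := by simp
  rw [this, Derivation.map_algebraMap]

lemma opexp_Dmul {x y : A} (hx : D x = 0) (hy : D y = 0) : D (x * y) = 0 := by
  rw [D.leibniz, hx, hy]; simp

lemma opexp_Dpow {x : A} (hx : D x = 0) (k : ℕ) : D (x ^ k) = 0 := by
  rw [D.leibniz_pow, hx]; simp

lemma opexp_DP (p a ℓ : A) (n r : ℕ) (hp : D p = 0) (ha : D a = 0) (hℓ : D ℓ = 0) :
    D (opexpP p a ℓ n r) = 0 := by
  rw [opexpP, map_sum]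
  refine Finset.sum_eq_zero fun j _ => ?_
  exact opexp_Dmul D (opexp_Dmul D (opexp_Dmul D (opexp_Dmul D (opexp_Dnat D _)
    (opexp_Dpow D ha _)) (opexp_Dpow D (opexp_Dnat D n) _)) (opexp_Dpow D hp _))
    (opexp_Dpow D hℓ _)

lemma opexp_DQ (p a ℓ : A) (n r : ℕ) (hp : D p = 0) (ha : D a = 0) (hℓ : D ℓ = 0) :
    D (opexpQ p a ℓ n r) = 0 := by
  rw [opexpQ, map_sum]
  refine Finset.sum_eq_zero fun j _ => ?_
  exact opexp_Dmul D (opexp_Dmul D (opexp_Dmul D (opexp_Dmul D (opexp_Dnat D _)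
    (opexp_Dpow D ha _)) (opexp_Dpow D (opexp_Dnat D n) _)) (opexp_Dpow D hp _))
    (opexp_Dpow D hℓ _)

lemma opexp_Qrec (p a ℓ : A) (n r : ℕ) :
    opexpQ p a ℓ n (r + 1) = a * opexpP p a ℓ n r + p * opexpQ p a ℓ n r := by
  rw [opexpQ, Finset.sum_range_succ]
  rw [show (r + 1).choose (2 * (r + 1) + 1) = 0 from Nat.choose_eq_zero_of_lt (by omega)]
  simp only [Nat.cast_zero, zero_mul, add_zero]
  have key : ∀ j ∈ Finset.range (r + 1),
      ((r + 1).choose (2 * j + 1) : A) * a ^ (2 * j + 1) * (n : A) ^ (2 * j)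
        * p ^ (r + 1 - 2 * j - 1) * ℓ ^ j
      = a * ((r.choose (2 * j) : A) * a ^ (2 * j) * (n : A) ^ (2 * j) * p ^ (r - 2 * j) * ℓ ^ j)
        + p * ((r.choose (2 * j + 1) : A) * a ^ (2 * j + 1) * (n : A) ^ (2 * j)
          * p ^ (r - 2 * j - 1) * ℓ ^ j) := by
    intro j _
    rw [Nat.choose_succ_succ, Nat.cast_add,
      show r + 1 - 2 * j - 1 = r - 2 * j from by omega]
    by_cases h : 2 * j + 1 ≤ r
    · have hpw : p ^ (r - 2 * j) = p * p ^ (r - 2 * j - 1) := by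
        rw [← pow_succ']
        congr 1
        omega
      rw [hpw]; ring
    · by_cases h2 : 2 * j ≤ r
      · rw [show r.choose (2 * j + 1) = 0 from Nat.choose_eq_zero_of_lt (by omega)]
        push_cast; ring
      · rw [show r.choose (2 * j + 1) = 0 from Nat.choose_eq_zero_of_lt (by omega),
          show r.choose (2 * j) = 0 from Nat.choose_eq_zero_of_lt (by omega)]
        push_cast; ring
  rw [Finset.sum_congr rfl key, Finset.sum_add_distrib, ← Finset.mul_sum, ← Finset.mul_sum]
  rfl

lemma opexp_Prec (p a ℓ : A) (n r : ℕ) :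
    opexpP p a ℓ n (r + 1)
      = p * opexpP p a ℓ n r + a * (n : A) ^ 2 * ℓ * opexpQ p a ℓ n r := by
  have hP : (∑ j ∈ Finset.range (r + 1),
      ((r.choose (2 * j + 2) : A) * a ^ (2 * (j + 1)) * (n : A) ^ (2 * (j + 1))
        * p ^ (r + 1 - 2 * (j + 1)) * ℓ ^ (j + 1))) + p ^ (r + 1)
      = p * opexpP p a ℓ n r := by
    rw [Finset.sum_range_succ,
      show r.choose (2 * r + 2) = 0 from Nat.choose_eq_zero_of_lt (by omega)]
    simp only [Nat.cast_zero, zero_mul, add_zero]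
    rw [opexpP, Finset.mul_sum, Finset.sum_range_succ']
    have h0 : p * (((r.choose (2 * 0) : A)) * a ^ (2 * 0) * (n : A) ^ (2 * 0)
        * p ^ (r - 2 * 0) * ℓ ^ 0) = p ^ (r + 1) := by
      simp [pow_succ, mul_comm]
    rw [h0]
    congr 1
    refine Finset.sum_congr rfl fun j _ => ?_
    rw [show 2 * (j + 1) = 2 * j + 2 from by ring]
    by_cases h : 2 * j + 2 ≤ r
    · have hpw : p * p ^ (r - (2 * j + 2)) = p ^ (r + 1 - (2 * j + 2)) := by
        rw [← pow_succ']
        congr 1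
        omega
      rw [← hpw]; ring
    · rw [show r.choose (2 * j + 2) = 0 from Nat.choose_eq_zero_of_lt (by omega)]
      push_cast; ring
  rw [opexpP, Finset.sum_range_succ']
  have h0 : ((r + 1).choose (2 * 0) : A) * a ^ (2 * 0) * (n : A) ^ (2 * 0)
      * p ^ (r + 1 - 2 * 0) * ℓ ^ 0 = p ^ (r + 1) := by simp
  rw [h0]
  have hsplit : ∀ j ∈ Finset.range (r + 1),
      ((r + 1).choose (2 * (j + 1)) : A) * a ^ (2 * (j + 1)) * (n : A) ^ (2 * (j + 1))
        * p ^ (r + 1 - 2 * (j + 1)) * ℓ ^ (j + 1)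
      = ((r.choose (2 * j + 2) : A) * a ^ (2 * (j + 1)) * (n : A) ^ (2 * (j + 1))
          * p ^ (r + 1 - 2 * (j + 1)) * ℓ ^ (j + 1))
        + a * (n : A) ^ 2 * ℓ
          * ((r.choose (2 * j + 1) : A) * a ^ (2 * j + 1) * (n : A) ^ (2 * j)
            * p ^ (r - 2 * j - 1) * ℓ ^ j) := by
    intro j _
    rw [show 2 * (j + 1) = (2 * j + 1) + 1 from by ring, Nat.choose_succ_succ, Nat.cast_add,
      show r + 1 - (2 * j + 1 + 1) = r - 2 * j - 1 from by omega]
    push_cast; ring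
  rw [Finset.sum_congr rfl hsplit, Finset.sum_add_distrib, ← Finset.mul_sum, ← hP]
  rw [show (∑ j ∈ Finset.range (r + 1),
      ((r.choose (2 * j + 1) : A) * a ^ (2 * j + 1) * (n : A) ^ (2 * j)
        * p ^ (r - 2 * j - 1) * ℓ ^ j)) = opexpQ p a ℓ n r from rfl]
  ring

lemma opexp_iter (p a ℓ g : A) (n : ℕ)
    (hp : D p = 0) (ha : D a = 0) (hℓ : D ℓ = 0)
    (hg : D (D g) = (n : A) ^ 2 * ℓ * g) (r : ℕ) :
    (fun x => p * x + a * D x)^[r] g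
      = opexpP p a ℓ n r * g + opexpQ p a ℓ n r * D g := by
  induction r with
  | zero => simp [opexpP, opexpQ]
  | succ r ih =>
    rw [Function.iterate_succ_apply', ih]
    beta_reduce
    rw [map_add, D.leibniz, D.leibniz, opexp_DP D p a ℓ n r hp ha hℓ,
      opexp_DQ D p a ℓ n r hp ha hℓ, hg, opexp_Prec, opexp_Qrec]
    simp only [smul_eq_mul]
    ring

end auxop

/-- Expansion of the powers of the operator `p + a·D` applied to `g` with
`D²g = n²·ℓ·g` and `p, a, ℓ` constants of `D`:
`(p + aD)^r(g) = P·g + Q·(Dg)` with explicit binomial sums `P`, `Q`. -/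
theorem operator_power_expansion {A : Type*} [CommRing A] [Algebra ℚ A]
    (D : Derivation ℚ A A) (p a ℓ g : A) (n : ℕ) (hn : 0 < n)
    (hp : D p = 0) (ha : D a = 0) (hℓ : D ℓ = 0)
    (hg : D (D g) = (n : A) ^ 2 * ℓ * g) :
    ∀ r : ℕ, 1 ≤ r →
      (fun x => p * x + a * D x)^[r] g =
        (∑ j ∈ Finset.range (r / 2 + 1),
          (r.choose (2 * j) : A) * a ^ (2 * j) * (n : A) ^ (2 * j)
            * p ^ (r - 2 * j) * ℓ ^ j) * g
        + (∑ j ∈ Finset.range ((r - 1) / 2 + 1),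
          (r.choose (2 * j + 1) : A) * a ^ (2 * j + 1) * (n : A) ^ (2 * j)
            * p ^ (r - 2 * j - 1) * ℓ ^ j) * D g := by
  intro r hr
  rw [opexp_iter D p a ℓ g n hp ha hℓ hg r]
  congr 2
  · rw [opexpP]
    refine (Finset.sum_subset (Finset.range_subset_range.2 (by omega)) fun j _ hj => ?_).symm
    rw [Finset.mem_range, not_lt] at hj
    rw [show r.choose (2 * j) = 0 from Nat.choose_eq_zero_of_lt (by omega)]
    simp
  · rw [opexpQ]
    refine (Finset.sum_subset (Finset.range_subset_range.2 (by omega)) fun j _ hj => ?_).symm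
    rw [Finset.mem_range, not_lt] at hj
    rw [show r.choose (2 * j + 1) = 0 from Nat.choose_eq_zero_of_lt (by omega)]
    simp
end

section
/- Let L(q,p) and G(q,p) be smooth functions on ℝ², let c, c₀, C ∈ ℝ, and let X_L = (∂L/∂p)∂_q - (∂L/∂q)∂_p. Assume X_L(X_L(G)) = -2(cL + c₀)G, and let γ be a smooth real function on an open interval satisfying γ' + cγ² + C = 0. Define on the corresponding open subset of ℝ⁴ with canonical coordinates (u, q, p_u, p) the functions H = ½p_u² - γ'(u)·L + c₀·γ(u)² and K = p_u·G + γ(u)·X_L(G). Then the canonical Poisson bracket {H, K} vanishes identically. -/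
/-- Partial derivatives of a function on the plane `ℝ²` with coordinates `(q,p)`. -/
noncomputable def pdq (F : ℝ × ℝ → ℝ) (y : ℝ × ℝ) : ℝ :=
  deriv (fun t => F (t, y.2)) y.1

noncomputable def pdp (F : ℝ × ℝ → ℝ) (y : ℝ × ℝ) : ℝ :=
  deriv (fun t => F (y.1, t)) y.2

/-- Hamiltonian vector field of `L` applied to `G`: `X_L(G) = L_p G_q - L_q G_p`. -/
noncomputable def XL (L G : ℝ × ℝ → ℝ) (y : ℝ × ℝ) : ℝ :=
  pdp L y * pdq G y - pdq L y * pdp G y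

/-- Extended phase space `(u, q, p_u, p)`. -/
noncomputable def pdU (F : ℝ × ℝ × ℝ × ℝ → ℝ) (x : ℝ × ℝ × ℝ × ℝ) : ℝ :=
  deriv (fun t => F (t, x.2.1, x.2.2.1, x.2.2.2)) x.1

noncomputable def pdQ (F : ℝ × ℝ × ℝ × ℝ → ℝ) (x : ℝ × ℝ × ℝ × ℝ) : ℝ :=
  deriv (fun t => F (x.1, t, x.2.2.1, x.2.2.2)) x.2.1

noncomputable def pdPu (F : ℝ × ℝ × ℝ × ℝ → ℝ) (x : ℝ × ℝ × ℝ × ℝ) : ℝ :=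
  deriv (fun t => F (x.1, x.2.1, t, x.2.2.2)) x.2.2.1

noncomputable def pdP (F : ℝ × ℝ × ℝ × ℝ → ℝ) (x : ℝ × ℝ × ℝ × ℝ) : ℝ :=
  deriv (fun t => F (x.1, x.2.1, x.2.2.1, t)) x.2.2.2

/-- Canonical Poisson bracket on `ℝ⁴` with coordinates `(u, q, p_u, p)`. -/
noncomputable def PB (F G : ℝ × ℝ × ℝ × ℝ → ℝ) (x : ℝ × ℝ × ℝ × ℝ) : ℝ :=
  pdU F x * pdPu G x - pdPu F x * pdU G x + pdQ F x * pdP G x - pdP F x * pdQ G x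


open scoped ContDiff
lemma hasDerivAt_pdq (F : ℝ × ℝ → ℝ) (hF : ContDiff ℝ (⊤ : ℕ∞) F) (y : ℝ × ℝ) :
    HasDerivAt (fun t => F (t, y.2)) (pdq F y) y.1 := by
  have h : DifferentiableAt ℝ (fun t => F (t, y.2)) y.1 :=
    ((hF.differentiable (by simp)).comp
      (differentiable_id.prodMk (differentiable_const _))).differentiableAt
  exact h.hasDerivAt

lemma hasDerivAt_pdp (F : ℝ × ℝ → ℝ) (hF : ContDiff ℝ (⊤ : ℕ∞) F) (y : ℝ × ℝ) :
    HasDerivAt (fun t => F (y.1, t)) (pdp F y) y.2 := by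
  have h : DifferentiableAt ℝ (fun t => F (y.1, t)) y.2 :=
    ((hF.differentiable (by simp)).comp
      ((differentiable_const _).prodMk differentiable_id)).differentiableAt
  exact h.hasDerivAt

lemma pdq_eq_fderiv (F : ℝ × ℝ → ℝ) (hF : ContDiff ℝ (⊤ : ℕ∞) F) (y : ℝ × ℝ) :
    pdq F y = fderiv ℝ F y (1, 0) := by
  have h : HasDerivAt (fun t => F (t, y.2)) (fderiv ℝ F y ((1 : ℝ), (0 : ℝ))) y.1 := by
    have hcomp := ((hF.differentiable (by simp)) y).hasFDerivAt.comp_hasDerivAt y.1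
      ((hasDerivAt_id y.1).prodMk (hasDerivAt_const y.1 y.2))
    simpa [Function.comp_def] using hcomp
  rw [pdq, h.deriv]

lemma pdp_eq_fderiv (F : ℝ × ℝ → ℝ) (hF : ContDiff ℝ (⊤ : ℕ∞) F) (y : ℝ × ℝ) :
    pdp F y = fderiv ℝ F y (0, 1) := by
  have h : HasDerivAt (fun t => F (y.1, t)) (fderiv ℝ F y ((0 : ℝ), (1 : ℝ))) y.2 := by
    have hcomp := ((hF.differentiable (by simp)) y).hasFDerivAt.comp_hasDerivAt y.2
      ((hasDerivAt_const y.2 y.1).prodMk (hasDerivAt_id y.2))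
    simpa [Function.comp_def] using hcomp
  rw [pdp, h.deriv]

lemma contDiff_pdq (F : ℝ × ℝ → ℝ) (hF : ContDiff ℝ (⊤ : ℕ∞) F) : ContDiff ℝ (⊤ : ℕ∞) (pdq F) := by
  have : pdq F = fun y => fderiv ℝ F y (1, 0) := funext fun y => pdq_eq_fderiv F hF y
  rw [this]
  exact (hF.fderiv_right (by simp)).clm_apply contDiff_const

lemma contDiff_pdp (F : ℝ × ℝ → ℝ) (hF : ContDiff ℝ (⊤ : ℕ∞) F) : ContDiff ℝ (⊤ : ℕ∞) (pdp F) := by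
  have : pdp F = fun y => fderiv ℝ F y (0, 1) := funext fun y => pdp_eq_fderiv F hF y
  rw [this]
  exact (hF.fderiv_right (by simp)).clm_apply contDiff_const

lemma contDiff_XL (L G : ℝ × ℝ → ℝ) (hL : ContDiff ℝ (⊤ : ℕ∞) L) (hG : ContDiff ℝ (⊤ : ℕ∞) G) :
    ContDiff ℝ (⊤ : ℕ∞) (XL L G) := by
  unfold XL
  exact ((contDiff_pdp L hL).mul (contDiff_pdq G hG)).sub
    ((contDiff_pdq L hL).mul (contDiff_pdp G hG))

/-- The extension `H = ½p_u² - γ'L + c₀γ²` (with `k = 1`, `Ω = 0`) of a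
one-degree-of-freedom Hamiltonian `L` Poisson-commutes with its characteristic
first integral `K = p_u G + γ X_L(G)`. -/
theorem extension_first_integral_k1
    (L G : ℝ × ℝ → ℝ) (hL : ContDiff ℝ (⊤ : ℕ∞) L) (hG : ContDiff ℝ (⊤ : ℕ∞) G)
    (c c₀ C : ℝ)
    (hfund : ∀ y, XL L (XL L G) y = -2 * (c * L y + c₀) * G y)
    (γ : ℝ → ℝ) (hγs : ContDiff ℝ (⊤ : ℕ∞) γ)
    (s : Set ℝ) (hs : IsOpen s)
    (hODE : ∀ u ∈ s, deriv γ u + c * γ u ^ 2 + C = 0)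
    (H K : ℝ × ℝ × ℝ × ℝ → ℝ)
    (hH : ∀ x : ℝ × ℝ × ℝ × ℝ,
      H x = (1 / 2) * x.2.2.1 ^ 2 - deriv γ x.1 * L (x.2.1, x.2.2.2)
            + c₀ * γ x.1 ^ 2)
    (hK : ∀ x : ℝ × ℝ × ℝ × ℝ,
      K x = x.2.2.1 * G (x.2.1, x.2.2.2) + γ x.1 * XL L G (x.2.1, x.2.2.2)) :
    ∀ x : ℝ × ℝ × ℝ × ℝ, x.1 ∈ s → PB H K x = 0 := by

  intro x hx
  set y : ℝ × ℝ := (x.2.1, x.2.2.2) with hy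
  have hXL : ContDiff ℝ (⊤ : ℕ∞) (XL L G) := contDiff_XL L G hL hG
  have hγ' : ContDiff ℝ ∞ (deriv γ) := (contDiff_infty_iff_deriv.mp (hγs.of_le (by simp))).2
  -- derivative facts
  have hγder : HasDerivAt γ (deriv γ x.1) x.1 :=
    ((hγs.differentiable (by simp)) x.1).hasDerivAt
  have hγ'der : HasDerivAt (deriv γ) (deriv (deriv γ) x.1) x.1 :=
    ((hγ'.differentiable (by simp)) x.1).hasDerivAt
  -- second derivative of γ via the ODE
  have hγ'' : deriv (deriv γ) x.1 = -(c * (2 * γ x.1 * deriv γ x.1)) := by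
    have hev : deriv γ =ᶠ[nhds x.1] fun v => -(c * γ v ^ 2 + C) := by
      filter_upwards [hs.mem_nhds hx] with v hv
      linarith [hODE v hv]
    have h2 : HasDerivAt (fun v => -(c * γ v ^ 2 + C))
        (-(c * (2 * γ x.1 * deriv γ x.1))) x.1 := by
      have hp : HasDerivAt (fun v => γ v ^ 2) (2 * γ x.1 * deriv γ x.1) x.1 := by
        have h := hγder.pow 2; simp at h; exact h
      exact ((hp.const_mul c).add_const C).neg
    rw [hev.deriv_eq]
    exact h2.deriv
  -- partial derivatives of H
  have hU_H : pdU H x = -(deriv (deriv γ) x.1 * L y) + c₀ * (2 * γ x.1 * deriv γ x.1) := by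
    unfold pdU; simp only [hH]
    exact (((((hγ'der.mul_const (L y)).const_sub ((1/2) * x.2.2.1 ^ 2)).add
      ((hγder.pow 2).const_mul c₀))).congr_deriv (by ring)).deriv
  have hPu_H : pdPu H x = x.2.2.1 := by
    unfold pdPu; simp only [hH]
    have : HasDerivAt (fun t : ℝ => (1/2) * t ^ 2 - deriv γ x.1 * L y + c₀ * γ x.1 ^ 2)
        x.2.2.1 x.2.2.1 := by
      have := (((hasDerivAt_pow 2 x.2.2.1).const_mul (1/2 : ℝ)).sub_const
        (deriv γ x.1 * L y)).add_const (c₀ * γ x.1 ^ 2)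
      exact this.congr_deriv (by norm_num; ring)
    exact this.deriv
  have hQ_H : pdQ H x = -(deriv γ x.1 * pdq L y) := by
    unfold pdQ; simp only [hH]
    exact ((((hasDerivAt_pdq L hL y).const_mul (deriv γ x.1)).const_sub
      ((1/2) * x.2.2.1 ^ 2) |>.add_const (c₀ * γ x.1 ^ 2)).congr_deriv (by ring)).deriv
  have hP_H : pdP H x = -(deriv γ x.1 * pdp L y) := by
    unfold pdP; simp only [hH]
    exact ((((hasDerivAt_pdp L hL y).const_mul (deriv γ x.1)).const_sub
      ((1/2) * x.2.2.1 ^ 2) |>.add_const (c₀ * γ x.1 ^ 2)).congr_deriv (by ring)).deriv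
  -- partial derivatives of K
  have hU_K : pdU K x = deriv γ x.1 * XL L G y := by
    unfold pdU; simp only [hK]
    exact (((hγder.mul_const (XL L G y)).const_add (x.2.2.1 * G y)).congr_deriv rfl).deriv
  have hPu_K : pdPu K x = G y := by
    unfold pdPu; simp only [hK]
    exact ((((hasDerivAt_id x.2.2.1).mul_const (G y)).add_const
      (γ x.1 * XL L G y)).congr_deriv (by ring)).deriv
  have hQ_K : pdQ K x = x.2.2.1 * pdq G y + γ x.1 * pdq (XL L G) y := by
    unfold pdQ; simp only [hK]
    exact ((((hasDerivAt_pdq G hG y).const_mul x.2.2.1).add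
      ((hasDerivAt_pdq (XL L G) hXL y).const_mul (γ x.1))).congr_deriv rfl).deriv
  have hP_K : pdP K x = x.2.2.1 * pdp G y + γ x.1 * pdp (XL L G) y := by
    unfold pdP; simp only [hK]
    exact ((((hasDerivAt_pdp G hG y).const_mul x.2.2.1).add
      ((hasDerivAt_pdp (XL L G) hXL y).const_mul (γ x.1))).congr_deriv rfl).deriv
  have hf := hfund y
  rw [show XL L (XL L G) y = pdp L y * pdq (XL L G) y - pdq L y * pdp (XL L G) y from rfl] at hf
  have hXLy : XL L G y = pdp L y * pdq G y - pdq L y * pdp G y := rfl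
  rw [PB, hU_H, hPu_H, hQ_H, hP_H, hU_K, hPu_K, hQ_K, hP_K, hXLy, hγ'']
  linear_combination (γ x.1 * deriv γ x.1) * hf
end

section
/- Let n ≥ 2 and c ≠ 0. If G : ℝⁿ → ℝ is a C² function satisfying the Hessian equation ∂_i∂_j G + c·G·δ_ij = 0 for all 1 ≤ i,j ≤ n, then G ≡ 0. -/
/-- Partial derivative `∂_i` of a function on `ℝⁿ`. -/
noncomputable def pd {n : ℕ} (i : Fin n) (F : (Fin n → ℝ) → ℝ) (x : Fin n → ℝ) : ℝ :=
  deriv (fun t => F (Function.update x i t)) (x i)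

lemma hasDerivAt_update' {n : ℕ} (x : Fin n → ℝ) (i : Fin n) (t : ℝ) :
    HasDerivAt (fun s => Function.update x i s) (Pi.single i 1) t := by
  rw [hasDerivAt_pi]
  intro k
  simp only [Function.update_apply]
  rcases eq_or_ne k i with rfl | h
  · simp only [if_pos rfl, Pi.single_eq_same]
    exact hasDerivAt_id t
  · simp only [if_neg h, Pi.single_eq_of_ne h]
    exact hasDerivAt_const t _

lemma pd_hasDerivAt {n : ℕ} (i : Fin n) {f : (Fin n → ℝ) → ℝ} {x : Fin n → ℝ}
    (hf : DifferentiableAt ℝ f x) :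
    HasDerivAt (fun t => f (Function.update x i t)) (fderiv ℝ f x (Pi.single i 1)) (x i) := by
  have h1 := hasDerivAt_update' x i (x i)
  have h2 : HasFDerivAt f (fderiv ℝ f x) (Function.update x i (x i)) := by
    rw [Function.update_eq_self]; exact hf.hasFDerivAt
  exact h2.comp_hasDerivAt (x i) h1

lemma pd_eq_fderiv {n : ℕ} (i : Fin n) {f : (Fin n → ℝ) → ℝ} {x : Fin n → ℝ}
    (hf : DifferentiableAt ℝ f x) :
    pd i f x = fderiv ℝ f x (Pi.single i 1) :=
  (pd_hasDerivAt i hf).deriv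

/-- If a function on `ℝⁿ` is invariant under changing any coordinate other than `i`,
then it depends only on coordinate `i`. -/
lemma depends_only {n : ℕ} (H : (Fin n → ℝ) → ℝ) (i : Fin n)
    (hH : ∀ j : Fin n, j ≠ i → ∀ x t, H (Function.update x j t) = H x)
    (x y : Fin n → ℝ) (hxy : x i = y i) : H x = H y := by
  have key : ∀ s : Finset (Fin n), i ∉ s →
      H (fun k => if k ∈ s then y k else x k) = H x := by
    intro s
    induction s using Finset.induction_on with
    | empty => intro _; simp
    | @insert a s ha ih =>
      intro hins
      have hai : a ≠ i := by rintro rfl; exact hins (Finset.mem_insert_self a s)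
      have his : i ∉ s := fun h => hins (Finset.mem_insert_of_mem h)
      have e : (fun k => if k ∈ insert a s then y k else x k)
          = Function.update (fun k => if k ∈ s then y k else x k) a (y a) := by
        funext k
        rcases eq_or_ne k a with rfl | hk
        · simp
        · simp [Function.update_apply, hk, Finset.mem_insert]
      rw [e, hH a hai, ih his]
  have h1 := key (Finset.univ.erase i) (Finset.notMem_erase i _)
  have e : (fun k => if k ∈ Finset.univ.erase i then y k else x k) = y := by
    funext k
    rcases eq_or_ne k i with rfl | hk
    · simp [hxy]
    · simp [Finset.mem_erase, hk]
  rw [e] at h1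
  exact h1.symm

/-- On flat `ℝⁿ` with `n ≥ 2` and `c ≠ 0`, the Hessian equation
`∂_i∂_j G + cG δ_ij = 0` has only the trivial solution. -/
theorem hessian_flat_trivial (n : ℕ) (hn : 2 ≤ n) (c : ℝ) (hc : c ≠ 0)
    (G : (Fin n → ℝ) → ℝ) (hG : ContDiff ℝ 2 G)
    (hHess : ∀ (i j : Fin n) (x : Fin n → ℝ),
      pd i (fun y => pd j G y) x + c * G x * (if i = j then (1:ℝ) else 0) = 0) :
    ∀ x, G x = 0 := by
  have hGd : Differentiable ℝ G := hG.differentiable (by norm_num)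
  set F : Fin n → (Fin n → ℝ) → ℝ := fun j x => fderiv ℝ G x (Pi.single j 1) with hF
  have hFc : ∀ j, ContDiff ℝ 1 (F j) :=
    fun j => (hG.fderiv_right (by norm_num)).clm_apply contDiff_const
  have hFd : ∀ j, Differentiable ℝ (F j) := fun j => (hFc j).differentiable one_ne_zero
  have hpdG : ∀ j : Fin n, pd j G = F j :=
    fun j => funext fun x => pd_eq_fderiv j (hGd x)
  -- Hessian equation in terms of F
  have hHess' : ∀ (i j : Fin n) (x : Fin n → ℝ),
      deriv (fun t => F j (Function.update x i t)) (x i)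
        + c * G x * (if i = j then (1:ℝ) else 0) = 0 := by
    intro i j x
    have h := hHess i j x
    simp only [hpdG] at h
    exact h
  -- Off-diagonal: F j is constant along i-lines for i ≠ j
  have L1 : ∀ i j : Fin n, i ≠ j → ∀ (x : Fin n → ℝ) (t : ℝ),
      F j (Function.update x i t) = F j x := by
    intro i j hij x t
    have hdiff : Differentiable ℝ (fun s => F j (Function.update x i s)) := by
      intro s
      have h := pd_hasDerivAt i (hFd j (Function.update x i s))
      simp only [Function.update_idem, Function.update_self] at h
      exact h.differentiableAt
    have hzero : ∀ s, deriv (fun t => F j (Function.update x i t)) s = 0 := by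
      intro s
      have h := hHess' i j (Function.update x i s)
      rw [if_neg hij, mul_zero, add_zero] at h
      simpa only [Function.update_idem, Function.update_self] using h
    have h := is_const_of_deriv_eq_zero hdiff hzero t (x i)
    simpa [Function.update_eq_self] using h
  -- F i depends only on coordinate i
  have dep1 : ∀ (i : Fin n) (x y : Fin n → ℝ), x i = y i → F i x = F i y :=
    fun i => depends_only (F i) i (fun j hj x t => L1 j i hj x t)
  -- G depends only on coordinate i, for every i
  have dep2 : ∀ (i : Fin n) (x y : Fin n → ℝ), x i = y i → G x = G y := by
    intro i x y hxy
    have h1 := hHess' i i x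
    have h2 := hHess' i i y
    rw [if_pos rfl, mul_one] at h1 h2
    have e : (fun t => F i (Function.update x i t))
        = (fun t => F i (Function.update y i t)) := by
      funext t
      exact dep1 i _ _ (by simp)
    rw [e, hxy] at h1
    have : c * G x = c * G y := by linarith
    exact mul_left_cancel₀ hc this
  -- G is constant
  obtain ⟨i0, i1, h01⟩ : ∃ i0 i1 : Fin n, i0 ≠ i1 :=
    ⟨⟨0, by omega⟩, ⟨1, by omega⟩, by simp [Fin.ext_iff]⟩
  have hconst : ∀ x : Fin n → ℝ, G x = G (fun _ => 0) := by
    intro x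
    have s1 : G x = G (Function.update (fun _ => (0:ℝ)) i1 (x i1)) :=
      dep2 i1 x _ (by simp)
    have s2 : G (Function.update (fun _ => (0:ℝ)) i1 (x i1)) = G (fun _ => 0) :=
      dep2 i0 _ _ (by simp [Function.update_of_ne h01])
    exact s1.trans s2
  -- conclude G = 0
  intro x
  have h := hHess' i0 i0 x
  rw [if_pos rfl, mul_one] at h
  have e : (fun t => F i0 (Function.update x i0 t)) = (fun _ => (0:ℝ)) := by
    funext t
    rw [← hpdG i0]
    show deriv (fun s => G (Function.update (Function.update x i0 t) i0 s))
        ((Function.update x i0 t) i0) = 0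
    have e2 : (fun s => G (Function.update (Function.update x i0 t) i0 s))
        = fun _ => G (fun _ => 0) := by
      funext s
      exact hconst _
    rw [e2, deriv_const]
  rw [e, deriv_const] at h
  have hcg : c * G x = 0 := by linarith
  exact (mul_eq_zero.mp hcg).resolve_left hc
end
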